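/- For all 0 ≤ s ≤ u < T one has Γ(s,T) Γ(0,T)⁻¹ E(0,u) + Γ(0,s)ᵀ (Γ(0,T)ᵀ)⁻¹ E(T,u) = E(s,u). -/

import Mathlib

open MeasureTheory Matrix Topology Filter

attribute [local instance] Matrix.normedAddCommGroup Matrix.normedSpace

/-!
Splitting `[0, T]` at `s` and using `E(T,v) = E(T,s) E(s,v)` on `[0, s]` gives
`κ(0,T) = E(T,s) κ(0,s) E(T,s)ᵀ + κ(s,T)`.
Since `Γ(0,T)⁻¹ = κ(0,T)⁻¹ E(T,0)` and the Gramians are symmetric, the left-hand side equals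
`E(s,T) (κ(s,T) + E(T,s) κ(0,s) E(T,s)ᵀ) κ(0,T)⁻¹ E(T,u) = E(s,T) E(T,u) = E(s,u)`.
-/

-- `NormedAddCommGroup.toENormedAddCommMonoid` does not unify with the local sup-norm instance
-- at instance transparency, so integrability of matrix-valued functions needs this by hand.
local instance Matrix.instENormedAddMonoidReal {m n : Type*} [Fintype m] [Fintype n] :
    ENormedAddMonoid (Matrix m n ℝ) :=
  NormedAddCommGroup.toENormedAddCommMonoid.toENormedAddMonoid

namespace Matrix

variable {l m n k : Type*} [Fintype l] [Fintype m] [Fintype n] [Fintype k]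

theorem intervalIntegral_mul_mul (A : Matrix l m ℝ) (B : Matrix n k ℝ) {f : ℝ → Matrix m n ℝ}
    {a b : ℝ} (hf : IntervalIntegrable f volume a b) :
    ∫ v in a..b, A * f v * B = A * (∫ v in a..b, f v) * B :=
  ((mulRightLinearMap l ℝ B).comp (mulLeftLinearMap n ℝ A)).toContinuousLinearMap
    |>.intervalIntegral_comp_comm hf

theorem intervalIntegral_transpose (f : ℝ → Matrix m n ℝ) (a b : ℝ) :
    ∫ v in a..b, (f v)ᵀ = (∫ v in a..b, f v)ᵀ :=
  LinearIsometry.intervalIntegral_comp_comm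
    { transposeLinearEquiv m n ℝ ℝ with norm_map' := norm_transpose } f

end Matrix

section Evolution

variable {n p : Type*} [Fintype n] [Fintype p]

theorem evolution_inv [DecidableEq n] {E : ℝ → ℝ → Matrix n n ℝ} (hEid : ∀ t : ℝ, 0 ≤ t → E t t = 1)
    (hEmul : ∀ r s t : ℝ, 0 ≤ r → 0 ≤ s → 0 ≤ t → E t s * E s r = E t r)
    {a b : ℝ} (ha : 0 ≤ a) (hb : 0 ≤ b) : (E a b)⁻¹ = E b a :=
  inv_eq_right_inv (by rw [hEmul a b a ha hb ha, hEid a ha])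

noncomputable def kalmanGramian (E : ℝ → ℝ → Matrix n n ℝ) (S : ℝ → Matrix n p ℝ) (s t : ℝ) :
    Matrix n n ℝ :=
  ∫ u in s..t, E t u * S u * (S u)ᵀ * (E t u)ᵀ

theorem kalmanGramian_transpose (E : ℝ → ℝ → Matrix n n ℝ) (S : ℝ → Matrix n p ℝ) (s t : ℝ) :
    (kalmanGramian E S s t)ᵀ = kalmanGramian E S s t := by
  simp only [kalmanGramian, ← intervalIntegral_transpose, transpose_mul, transpose_transpose,
    Matrix.mul_assoc]

theorem intervalIntegrable_kalman_integrand {E : ℝ → ℝ → Matrix n n ℝ} {S : ℝ → Matrix n p ℝ}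
    (hE : ContinuousOn (fun x : ℝ × ℝ => E x.1 x.2) (Set.Ici 0 ×ˢ Set.Ici 0))
    (hS : ContinuousOn S (Set.Ici 0)) {t a b : ℝ} (ht : 0 ≤ t) (ha : 0 ≤ a) (hb : 0 ≤ b) :
    IntervalIntegrable (fun v => E t v * S v * (S v)ᵀ * (E t v)ᵀ) volume a b := by
  have hEt : ContinuousOn (E t) (Set.Ici 0) :=
    hE.comp (Continuous.prodMk_right t).continuousOn fun _ hv => ⟨ht, hv⟩
  have hcont : ContinuousOn (fun v => E t v * S v * (S v)ᵀ * (E t v)ᵀ) (Set.Ici 0) := by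
    fun_prop
  exact (hcont.mono fun _ hv => (le_min ha hb).trans hv.1).intervalIntegrable

theorem kalmanGramian_add {E : ℝ → ℝ → Matrix n n ℝ} {S : ℝ → Matrix n p ℝ}
    (hE : ContinuousOn (fun x : ℝ × ℝ => E x.1 x.2) (Set.Ici 0 ×ˢ Set.Ici 0))
    (hS : ContinuousOn S (Set.Ici 0))
    (hEmul : ∀ r s t : ℝ, 0 ≤ r → 0 ≤ s → 0 ≤ t → E t s * E s r = E t r)
    {r s t : ℝ} (hr : 0 ≤ r) (hrs : r ≤ s) (hst : s ≤ t) :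
    kalmanGramian E S r t
      = E t s * kalmanGramian E S r s * (E t s)ᵀ + kalmanGramian E S s t := by
  have hs : 0 ≤ s := hr.trans hrs
  have ht : 0 ≤ t := hs.trans hst
  have hconj : ∫ v in r..s, E t v * S v * (S v)ᵀ * (E t v)ᵀ
      = E t s * kalmanGramian E S r s * (E t s)ᵀ := by
    rw [kalmanGramian, ← intervalIntegral_mul_mul _ _
      (intervalIntegrable_kalman_integrand hE hS hs hr hs)]
    refine intervalIntegral.integral_congr fun v hv => ?_
    have hv : 0 ≤ v := (le_min hr hs).trans hv.1
    simp only [← hEmul v s t hv hs ht, transpose_mul, Matrix.mul_assoc]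
  rw [kalmanGramian, ← intervalIntegral.integral_add_adjacent_intervals
    (intervalIntegrable_kalman_integrand hE hS ht hr hs)
    (intervalIntegrable_kalman_integrand hE hS ht hs ht), hconj]
  rfl

theorem evolution_bridge_of_split [DecidableEq n] {E : ℝ → ℝ → Matrix n n ℝ}
    (hEid : ∀ t : ℝ, 0 ≤ t → E t t = 1)
    (hEmul : ∀ r s t : ℝ, 0 ≤ r → 0 ≤ s → 0 ≤ t → E t s * E s r = E t r)
    {Kᵣₛ Kₛₜ Kᵣₜ : Matrix n n ℝ} {r s t u : ℝ} (hr : 0 ≤ r) (hs : 0 ≤ s) (ht : 0 ≤ t)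
    (hu : 0 ≤ u) (hKᵣₜ : IsUnit Kᵣₜ.det) (hKᵣₛ_symm : Kᵣₛᵀ = Kᵣₛ) (hKᵣₜ_symm : Kᵣₜᵀ = Kᵣₜ)
    (hsplit : Kᵣₜ = E t s * Kᵣₛ * (E t s)ᵀ + Kₛₜ) :
    E s t * Kₛₜ * (E r t * Kᵣₜ)⁻¹ * E r u + (E r s * Kᵣₛ)ᵀ * ((E r t * Kᵣₜ)ᵀ)⁻¹ * E t u
      = E s u := by
  have hinv : (E r t * Kᵣₜ)⁻¹ = Kᵣₜ⁻¹ * E t r := by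
    rw [Matrix.mul_inv_rev, evolution_inv hEid hEmul hr ht]
  have hinvT : ((E r t * Kᵣₜ)ᵀ)⁻¹ = (E t r)ᵀ * Kᵣₜ⁻¹ := by
    rw [← transpose_nonsing_inv, hinv, transpose_mul, transpose_nonsing_inv, hKᵣₜ_symm]
  have hEst : E s t * E t s = 1 := by rw [hEmul s t s hs ht hs, hEid s hs]
  calc _ = (E s t * Kₛₜ + Kᵣₛ * (E t s)ᵀ) * Kᵣₜ⁻¹ * E t u := by
        rw [hinv, hinvT, transpose_mul, hKᵣₛ_symm]
        simp only [add_mul, Matrix.mul_assoc, hEmul u r t hu hr ht]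
        rw [← Matrix.mul_assoc (E r s)ᵀ, ← transpose_mul, hEmul s r t hs hr ht]
    _ = E s t * Kᵣₜ * Kᵣₜ⁻¹ * E t u := by
        congr 2
        rw [hsplit, mul_add, ← Matrix.mul_assoc, ← Matrix.mul_assoc, hEst, Matrix.one_mul, add_comm]
    _ = E s u := by
        rw [Matrix.mul_assoc (E s t), mul_nonsing_inv _ hKᵣₜ, Matrix.mul_one, hEmul u t s hu ht hs]

end Evolution

theorem bridge_evolution_identity_general
    {d p : ℕ} (S : ℝ → Matrix (Fin d) (Fin p) ℝ)
    (hS : ContinuousOn S (Set.Ici 0))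
    (E : ℝ → ℝ → Matrix (Fin d) (Fin d) ℝ)
    (hEcont : ContinuousOn (fun x : ℝ × ℝ => E x.1 x.2) (Set.Ici 0 ×ˢ Set.Ici 0))
    (hEid : ∀ t : ℝ, 0 ≤ t → E t t = 1)
    (hEmul : ∀ r s t : ℝ, 0 ≤ r → 0 ≤ s → 0 ≤ t → E t s * E s r = E t r)
    (κ Γ : ℝ → ℝ → Matrix (Fin d) (Fin d) ℝ)
    (hκ : ∀ s t : ℝ, 0 ≤ s → s ≤ t →
      κ s t = ∫ u in s..t, E t u * S u * (S u)ᵀ * (E t u)ᵀ)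
    (hΓ : ∀ s t : ℝ, 0 ≤ s → s ≤ t → Γ s t = E s t * κ s t)
    (T : ℝ) (hT : 0 < T)
    (hκpd : ∀ s t : ℝ, 0 ≤ s → s < t → (κ s t).IsSymm ∧ (κ s t).PosDef) :
    ∀ s u : ℝ, 0 ≤ s → s ≤ u → u < T →
      Γ s T * (Γ 0 T)⁻¹ * E 0 u + (Γ 0 s)ᵀ * ((Γ 0 T)ᵀ)⁻¹ * E T u = E s u := by
  intro s u hs hsu huT
  have hsT : s ≤ T := (hsu.trans_lt huT).le
  have hΓκ : ∀ a b : ℝ, 0 ≤ a → a ≤ b → Γ a b = E a b * kalmanGramian E S a b :=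
    fun a b ha hab => (hΓ a b ha hab).trans (congrArg _ (hκ a b ha hab))
  have hunit : IsUnit (kalmanGramian E S 0 T).det := by
    rw [kalmanGramian, ← hκ 0 T le_rfl hT.le]
    exact (hκpd 0 T le_rfl hT).2.det_pos.ne'.isUnit
  rw [hΓκ s T hs hsT, hΓκ 0 T le_rfl hT.le, hΓκ 0 s le_rfl hs]
  exact evolution_bridge_of_split hEid hEmul le_rfl hs hT.le (hs.trans hsu) hunit
    (kalmanGramian_transpose E S 0 s) (kalmanGramian_transpose E S 0 T)
    (kalmanGramian_add hEcont hS hEmul le_rfl hs hsT)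

/-- Identity (gen_bridge_evol): for `0 ≤ s ≤ u < T`,
`Γ(s,T) Γ(0,T)⁻¹ E(0,u) + Γ(0,s)ᵀ (Γ(0,T)ᵀ)⁻¹ E(T,u) = E(s,u)`. -/
theorem bridge_evolution_identity
    {d p : ℕ} (hd : 1 ≤ d)
    (Q : ℝ → Matrix (Fin d) (Fin d) ℝ) (S : ℝ → Matrix (Fin d) (Fin p) ℝ)
    (hQ : ContinuousOn Q (Set.Ici 0)) (hS : ContinuousOn S (Set.Ici 0))
    (E : ℝ → ℝ → Matrix (Fin d) (Fin d) ℝ)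
    (hEcont : ContinuousOn (fun x : ℝ × ℝ => E x.1 x.2) (Set.Ici 0 ×ˢ Set.Ici 0))
    (hEid : ∀ t : ℝ, 0 ≤ t → E t t = 1)
    (hEmul : ∀ r s t : ℝ, 0 ≤ r → 0 ≤ s → 0 ≤ t → E t s * E s r = E t r)
    (hEderiv : ∀ s : ℝ, 0 ≤ s → ∀ t : ℝ, 0 ≤ t →
      HasDerivAt (fun τ => E τ s) (Q t * E t s) t)
    (κ Γ : ℝ → ℝ → Matrix (Fin d) (Fin d) ℝ)
    (hκ : ∀ s t : ℝ, 0 ≤ s → s ≤ t →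
      κ s t = ∫ u in s..t, E t u * S u * (S u)ᵀ * (E t u)ᵀ)
    (hΓ : ∀ s t : ℝ, 0 ≤ s → s ≤ t → Γ s t = E s t * κ s t)
    (T : ℝ) (hT : 0 < T)
    (hκpd : ∀ s t : ℝ, 0 ≤ s → s < t → (κ s t).IsSymm ∧ (κ s t).PosDef) :
    ∀ s u : ℝ, 0 ≤ s → s ≤ u → u < T →
      Γ s T * (Γ 0 T)⁻¹ * E 0 u + (Γ 0 s)ᵀ * ((Γ 0 T)ᵀ)⁻¹ * E T u = E s u :=
  bridge_evolution_identity_general S hS E hEcont hEid hEmul κ Γ hκ hΓ T hT hκpd
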